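/- arXiv:1406.3212 — 3 statements merged into one kernel-verified Lean document; each statement's English description precedes it below -/
import Mathlib

section
/- For every positive diagonal 2×2 matrix D, the matrix (D·A)² is a Q-matrix, where A = [[1, 2], [-1, 5]]. -/
open Matrix

/-- A 2×2 real matrix is a Q-matrix if its trace and determinant are positive. -/
def IsQ (M : Matrix (Fin 2) (Fin 2) ℝ) : Prop :=
  0 < M.trace ∧ 0 < M.det

theorem DA_sq_is_Q :
    ∀ D : Matrix (Fin 2) (Fin 2) ℝ, D.IsDiag → (∀ i, 0 < D i i) →
      IsQ ((D * !![(1:ℝ), 2; -1, 5]) * (D * !![(1:ℝ), 2; -1, 5])) := by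
  intro D hD hpos
  have h01 : D 0 1 = 0 := hD (by decide)
  have h10 : D 1 0 = 0 := hD (by decide)
  have h0 := hpos 0
  have h1 := hpos 1
  constructor
  · simp [Matrix.trace_fin_two, Matrix.mul_apply, Fin.sum_univ_two, h01, h10]
    nlinarith [sq_nonneg (D 0 0 - 5 * D 1 1), mul_pos h0 h1]
  · simp [Matrix.det_fin_two, Matrix.mul_apply, Fin.sum_univ_two, h01, h10]
    exact ⟨⟨h0.ne', h1.ne'⟩, by norm_num⟩
end

section
/- There exists a 2×2 real matrix A such that (D·A)² is a Q-matrix for every positive diagonal matrix D, but A² is not a P₀-matrix (hence not a P₀⁺-matrix). -/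
open Matrix

/-- A 2×2 real matrix is a P₀-matrix if its diagonal entries and determinant are nonnegative. -/
def IsP0 (M : Matrix (Fin 2) (Fin 2) ℝ) : Prop :=
  0 ≤ M 0 0 ∧ 0 ≤ M 1 1 ∧ 0 ≤ M.det

theorem exists_counterexample :
    ∃ A : Matrix (Fin 2) (Fin 2) ℝ,
      (∀ D : Matrix (Fin 2) (Fin 2) ℝ, D.IsDiag → (∀ i, 0 < D i i) →
        IsQ ((D * A) * (D * A))) ∧ ¬ IsP0 (A * A) := by
  refine ⟨!![1, 2; -1, 5], ?_, ?_⟩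
  · intro D hD hpos
    have h01 : D 0 1 = 0 := hD (by decide)
    have h10 : D 1 0 = 0 := hD (by decide)
    have p0 := hpos 0
    have p1 := hpos 1
    constructor
    · simp only [Matrix.trace_fin_two, Matrix.mul_apply, Fin.sum_univ_two,
        Matrix.cons_val', Matrix.cons_val_zero, Matrix.cons_val_one, Matrix.head_cons,
        Matrix.head_fin_const, Matrix.empty_val', Matrix.cons_val_fin_one, h01, h10]
      norm_num
      nlinarith [sq_nonneg (D 0 0 - 2 * D 1 1), sq_nonneg (D 1 1)]
    · simp only [Matrix.det_fin_two, Matrix.mul_apply, Fin.sum_univ_two,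
        Matrix.cons_val', Matrix.cons_val_zero, Matrix.cons_val_one, Matrix.head_cons,
        Matrix.head_fin_const, Matrix.empty_val', Matrix.cons_val_fin_one, h01, h10]
      norm_num
      nlinarith [mul_pos p0 p1]
  · intro ⟨h, _⟩
    simp only [Matrix.mul_apply, Fin.sum_univ_two,
      Matrix.cons_val', Matrix.cons_val_zero, Matrix.cons_val_one, Matrix.head_cons,
      Matrix.head_fin_const, Matrix.empty_val', Matrix.cons_val_fin_one] at h
    norm_num at h
end

section
/- For any 2×2 real matrix A with a₁₂·a₂₁ ≤ 0 (anti-sign symmetric), it is NOT necessarily true that (D·A)² being a Q-matrix for all positive diagonal D implies A² is a P₀-matrix; i.e., the implication fails for A = [[1, 2], [-1, 5]]. -/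
open Matrix

theorem implication_fails :
    ¬ ∀ A : Matrix (Fin 2) (Fin 2) ℝ, A 0 1 * A 1 0 ≤ 0 →
        (∀ D : Matrix (Fin 2) (Fin 2) ℝ, D.IsDiag → (∀ i, 0 < D i i) →
          IsQ ((D * A) * (D * A))) →
        IsP0 (A * A) := by
  intro h
  have := h !![1, 2; -1, 5] (by norm_num) ?_
  · obtain ⟨h00, -⟩ := this
    simp [Matrix.mul_apply, Fin.sum_univ_two] at h00
  · intro D hdiag hpos
    have h01 : D 0 1 = 0 := hdiag (by decide)
    have h10 : D 1 0 = 0 := hdiag (by decide)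
    have p0 := hpos 0
    have p1 := hpos 1
    constructor
    · rw [Matrix.trace_fin_two]
      simp [Matrix.mul_apply, Fin.sum_univ_two, h01, h10]
      nlinarith [sq_nonneg (D 0 0 - 2 * D 1 1), sq_nonneg (D 1 1)]
    · rw [Matrix.det_fin_two]
      simp [Matrix.mul_apply, Fin.sum_univ_two, h01, h10]
      nlinarith [mul_pos p0 p1, sq_nonneg (D 0 0 * D 1 1)]
end
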